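/- For all integers n ≥ 1, the derivative of the Hendriksen–van Rossum polynomial satisfies d/dz P_n(z; α, β) = n · P_{n−1}(z; α+1, β). -/

import Mathlib

open Finset

noncomputable def poch (a : ℝ) (k : ℕ) : ℝ := ∏ i ∈ Finset.range k, (a + i)

noncomputable def HR (n : ℕ) (α β : ℝ) (z : ℝ) : ℝ :=
  (poch β n / poch (α + 1) n) *
    ∑ k ∈ Finset.range (n + 1),
      (poch (-(n : ℝ)) k * poch (α + 1) k) / ((k.factorial : ℝ) * poch (1 - β - (n : ℝ)) k) * z ^ k

/-!
Both sides are polynomials in `z`, so it suffices to compare the coefficient of `z ^ j`. Peeling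
the first factor off each Pochhammer symbol, `(a)_(k+1) = a (a+1)_k`, reduces the coefficient of
the derivative to that of `P_{n-1}(z; α+1, β)` times `n · (β+n-1) / (-(1-β-n))`, and this last
fraction is `1`.
-/

theorem hasDerivAt_sum_range_mul_pow {𝕜 : Type*} [NontriviallyNormedField 𝕜] (c : ℕ → 𝕜)
    (N : ℕ) (z : 𝕜) :
    HasDerivAt (fun t => ∑ k ∈ range (N + 1), c k * t ^ k)
      (∑ k ∈ range N, ((k + 1) * c (k + 1)) * z ^ k) z := by
  have h := HasDerivAt.fun_sum (u := range (N + 1)) fun k _ => (hasDerivAt_pow k z).const_mul (c k)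
  refine h.congr_deriv ?_
  rw [sum_range_succ']
  simp only [Nat.cast_zero, zero_mul, mul_zero, add_zero, Nat.cast_add, Nat.cast_one,
    Nat.add_sub_cancel]
  exact sum_congr rfl fun k _ => by ring

theorem poch_zero (a : ℝ) : poch a 0 = 1 := prod_range_zero _

theorem poch_succ_right (a : ℝ) (k : ℕ) : poch a (k + 1) = poch a k * (a + k) :=
  prod_range_succ _ _

theorem poch_succ_left (a : ℝ) (k : ℕ) : poch a (k + 1) = a * poch (a + 1) k := by
  rw [poch, prod_range_succ', poch]
  push_cast
  simp only [add_zero, add_assoc, add_comm (1 : ℝ)]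
  ring

noncomputable def hrCoeff (n : ℕ) (α β : ℝ) (k : ℕ) : ℝ :=
  poch β n / poch (α + 1) n *
    ((poch (-(n : ℝ)) k * poch (α + 1) k) / ((k.factorial : ℝ) * poch (1 - β - (n : ℝ)) k))

theorem HR_eq_sum (n : ℕ) (α β z : ℝ) :
    HR n α β z = ∑ k ∈ range (n + 1), hrCoeff n α β k * z ^ k := by
  simp only [HR, hrCoeff, mul_sum, mul_assoc]

theorem succ_mul_hrCoeff_succ (m j : ℕ) (α β : ℝ) (hα : α + 1 ≠ 0)
    (hβ : 1 - β - ((m + 1 : ℕ) : ℝ) ≠ 0) :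
    ((j : ℝ) + 1) * hrCoeff (m + 1) α β (j + 1) = ((m : ℝ) + 1) * hrCoeff m (α + 1) β j := by
  have hj : (j : ℝ) + 1 ≠ 0 := by positivity
  have hfac : ((j + 1).factorial : ℝ) = ((j : ℝ) + 1) * j.factorial := by
    push_cast [Nat.factorial_succ]; ring
  simp only [hrCoeff, poch_succ_right β m, poch_succ_left (α + 1), poch_succ_left (-_),
    poch_succ_left (1 - β - _), hfac]
  push_cast at hβ ⊢
  rw [show -((m : ℝ) + 1) + 1 = -m by ring, show 1 - β - ((m : ℝ) + 1) + 1 = 1 - β - m by ring,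
    show β + (m : ℝ) = -(1 - β - (m + 1)) by ring]
  field_simp

theorem hr_derivative_general (n : ℕ) (α β : ℝ)
    (hα : ∀ j < n + 1, α + 1 + (j : ℝ) ≠ 0)
    (hd : ∀ j < n, 1 - β - (n : ℝ) + (j : ℝ) ≠ 0) :
    ∀ z : ℝ, deriv (fun t => HR n α β t) z = (n : ℝ) * HR (n - 1) (α + 1) β z := by
  intro z
  cases n with
  | zero => simp [HR, poch_zero]
  | succ m =>
    have hα₀ : α + 1 ≠ 0 := by simpa using hα 0 (by omega)
    have hd₀ : 1 - β - ((m + 1 : ℕ) : ℝ) ≠ 0 := by simpa using hd 0 (by omega)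
    simp only [HR_eq_sum, Nat.add_sub_cancel]
    rw [(hasDerivAt_sum_range_mul_pow _ _ z).deriv, mul_sum]
    refine sum_congr rfl fun j _ => ?_
    rw [succ_mul_hrCoeff_succ m j α β hα₀ hd₀]
    push_cast
    ring

theorem hr_derivative (n : ℕ) (hn : 1 ≤ n) (α β : ℝ)
    (hβ : ∀ j < n, β + (j : ℝ) ≠ 0)
    (hα : ∀ j < n + 1, α + 1 + (j : ℝ) ≠ 0)
    (hd : ∀ j < n, 1 - β - (n : ℝ) + (j : ℝ) ≠ 0)
    (hd' : ∀ j < n - 1, 1 - β - ((n : ℝ) - 1) + (j : ℝ) ≠ 0) :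
    ∀ z : ℝ, deriv (fun t => HR n α β t) z = (n : ℝ) * HR (n - 1) (α + 1) β z :=
  hr_derivative_general n α β hα hd
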